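/- For every integer k ≥ 4, the Toeplitz graph T_{2^k}⟨{1, 2^{k−2}, 2^{k−1}}⟩ satisfies 2^k/(2^k−2) ≤ ldim_f(T_{2^k}⟨{1, 2^{k−2}, 2^{k−1}}⟩) ≤ 2^k/8 = 2^{k−3}. -/

import Mathlib

/-!
Write `N = 2^k = 4m`, so that the graph is `T_N⟨{1, m, 2m}⟩`.

Upper bound: every edge `uv` is resolved by at least eight vertices (its ends, vertices adjacent
to exactly one end, and vertices at distance two from one end with no common neighbour with the
other), as a case analysis on `v - u ∈ {1, m, 2m}` and the position of `u` shows. Hence the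
constant function `1/8` is a local resolving function, of total weight `N/8`.

Lower bound: for every even `a`, both `a` and `a + 1` are equidistant from the two ends of one
edge (`a + m, a + 2m` if `a < 2m`, and `a - 2m, a - m` otherwise). The constraint of that edge then
ignores both, so `1 + ζ a + ζ (a + 1) ≤ ∑ ζ`. Summing over all `N` vertices, each paired with its
partner of opposite parity, gives `N + 2 ∑ ζ ≤ N ∑ ζ`.
-/

open Finset

/-- A local resolving function of a graph `G`: a map `ζ : V → [0,1]` such that for every
pair of adjacent vertices `u v`, the sum of `ζ` over the local resolving neighborhood
`R{u,v} = {w : d(w,u) ≠ d(w,v)}` is at least `1`. -/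
def IsLocalResolvingFunction {V : Type*} [Fintype V] (G : SimpleGraph V) (ζ : V → ℝ) : Prop :=
  (∀ w, ζ w ∈ Set.Icc (0 : ℝ) 1) ∧
    ∀ u v, G.Adj u v →
      1 ≤ ∑ w ∈ Finset.univ.filter (fun w => G.dist w u ≠ G.dist w v), ζ w

/-- The local fractional metric dimension of `G`: the minimum of `∑ v, ζ v` over all
local resolving functions `ζ` of `G`. -/
noncomputable def ldimf {V : Type*} [Fintype V] (G : SimpleGraph V) : ℝ :=
  sInf {s : ℝ | ∃ ζ : V → ℝ, IsLocalResolvingFunction G ζ ∧ s = ∑ v, ζ v}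

/-- The Toeplitz graph `T_n⟨S⟩` (vertices `0, …, n-1` standing for `1, …, n`):
two distinct vertices are adjacent iff their absolute difference lies in `S`. -/
def toeplitzGraph (n : ℕ) (S : Set ℕ) : SimpleGraph (Fin n) where
  Adj p q := p ≠ q ∧ Nat.dist (p : ℕ) (q : ℕ) ∈ S
  symm := ⟨fun p q ⟨h1, h2⟩ => ⟨h1.symm, by rwa [Nat.dist_comm]⟩⟩
  loopless := ⟨fun p ⟨h, _⟩ => h rfl⟩

theorem SimpleGraph.dist_eq_two_iff {V : Type*} {G : SimpleGraph V} {u v : V} :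
    G.dist u v = 2 ↔ u ≠ v ∧ ¬ G.Adj u v ∧ (G.commonNeighbors u v).Nonempty := by
  rw [SimpleGraph.dist, ENat.toNat_eq_iff two_ne_zero]
  exact G.edist_eq_two_iff

lemma length_le_card_filter {N : ℕ} {p : Fin N → Prop} [DecidablePred p] (l : List ℕ)
    (hl : l.Nodup) (hN : ∀ x ∈ l, x < N) (hp : ∀ w : Fin N, (w : ℕ) ∈ l → p w) :
    l.length ≤ #(univ.filter p) := by
  rw [← List.toFinset_card_of_nodup hl, ← card_attachFin l.toFinset (by simpa using hN)]
  exact card_le_card fun w hw => mem_filter.2 ⟨mem_univ w, hp w (by simpa using hw)⟩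

section LocalResolving

variable {V : Type*} [Fintype V] {G : SimpleGraph V}

noncomputable def localResolvingNbhd (G : SimpleGraph V) (u v : V) : Finset V :=
  univ.filter fun w => G.dist w u ≠ G.dist w v

lemma localResolvingNbhd_comm (u v : V) : localResolvingNbhd G u v = localResolvingNbhd G v u :=
  filter_congr fun _ _ => ne_comm

lemma left_mem_localResolvingNbhd {u v : V} (h : G.Adj u v) : u ∈ localResolvingNbhd G u v := by
  simp [localResolvingNbhd, SimpleGraph.dist_eq_one_iff_adj.2 h]

lemma isLocalResolvingFunction_const_inv {k : ℕ} (hk : 0 < k)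
    (h : ∀ u v, G.Adj u v → k ≤ #(localResolvingNbhd G u v)) :
    IsLocalResolvingFunction G fun _ => (k : ℝ)⁻¹ := by
  have hk' : (0 : ℝ) < k := by exact_mod_cast hk
  refine ⟨fun _ => ⟨by positivity, inv_le_one_of_one_le₀ (by exact_mod_cast hk)⟩, fun u v huv => ?_⟩
  rw [sum_const, nsmul_eq_mul, ← div_eq_mul_inv, one_le_div hk']
  exact_mod_cast h u v huv

lemma ldimf_le_sum {ζ : V → ℝ} (hζ : IsLocalResolvingFunction G ζ) : ldimf G ≤ ∑ w, ζ w :=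
  csInf_le ⟨0, by rintro _ ⟨ζ, hζ, rfl⟩; exact sum_nonneg fun w _ => (hζ.1 w).1⟩
    ⟨ζ, hζ, rfl⟩

lemma le_ldimf {c : ℝ} (h : ∀ ζ, IsLocalResolvingFunction G ζ → c ≤ ∑ w, ζ w) : c ≤ ldimf G := by
  have h₁ := isLocalResolvingFunction_const_inv (G := G) one_pos fun u v huv =>
    card_pos.2 ⟨u, left_mem_localResolvingNbhd huv⟩
  exact le_csInf ⟨_, _, h₁, rfl⟩ (by rintro _ ⟨ζ, hζ, rfl⟩; exact h ζ hζ)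

lemma one_add_add_le_sum {ζ : V → ℝ} (hζ : IsLocalResolvingFunction G ζ) {u v w₁ w₂ : V}
    (huv : G.Adj u v) (h₁ : G.dist w₁ u = G.dist w₁ v) (h₂ : G.dist w₂ u = G.dist w₂ v)
    (hw : w₁ ≠ w₂) : 1 + ζ w₁ + ζ w₂ ≤ ∑ w, ζ w := by
  classical
  have hdisj : Disjoint (localResolvingNbhd G u v) {w₁, w₂} := by
    simp [localResolvingNbhd, disjoint_right, h₁, h₂]
  calc 1 + ζ w₁ + ζ w₂ ≤ ∑ w ∈ localResolvingNbhd G u v, ζ w + ∑ w ∈ {w₁, w₂}, ζ w := by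
        rw [sum_pair hw, ← add_assoc]; gcongr; exact hζ.2 u v huv
    _ = ∑ w ∈ localResolvingNbhd G u v ∪ {w₁, w₂}, ζ w := (sum_union hdisj).symm
    _ ≤ ∑ w, ζ w := sum_le_univ_sum_of_nonneg fun w => (hζ.1 w).1

lemma card_div_le_ldimf_of_perm (hV : 2 < Fintype.card V) (σ : Equiv.Perm V)
    (hσ : ∀ w, σ w ≠ w)
    (h : ∀ w, ∃ u v, G.Adj u v ∧ G.dist w u = G.dist w v ∧ G.dist (σ w) u = G.dist (σ w) v) :
    (Fintype.card V : ℝ) / (Fintype.card V - 2) ≤ ldimf G := by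
  refine le_ldimf fun ζ hζ => ?_
  have hw : ∀ w, 1 + ζ w + ζ (σ w) ≤ ∑ w, ζ w := fun w => by
    obtain ⟨u, v, huv, h₁, h₂⟩ := h w
    exact one_add_add_le_sum hζ huv h₁ h₂ (hσ w).symm
  have hsum := sum_le_sum fun w (_ : w ∈ univ) => hw w
  rw [sum_add_distrib, sum_add_distrib, Equiv.sum_comp σ ζ, sum_const, sum_const, card_univ,
    nsmul_eq_mul, nsmul_eq_mul, mul_one] at hsum
  have hV' : (2 : ℝ) < Fintype.card V := by exact_mod_cast hV
  rw [div_le_iff₀ (by linarith)]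
  linarith

lemma ldimf_le_card_div {k : ℕ} (hk : 0 < k)
    (h : ∀ u v, G.Adj u v → k ≤ #(localResolvingNbhd G u v)) :
    ldimf G ≤ Fintype.card V / k := by
  refine (ldimf_le_sum (isLocalResolvingFunction_const_inv hk h)).trans_eq ?_
  rw [sum_const, card_univ, nsmul_eq_mul, div_eq_mul_inv]

end LocalResolving

namespace toeplitzGraph

/-- Adjacency of `T_N⟨{1, m, 2m}⟩` on the underlying naturals, up to `x ≠ y`; reducible so that
`omega` sees through it. -/
abbrev IsStep (m x y : ℕ) : Prop :=
  x + 1 = y ∨ y + 1 = x ∨ x + m = y ∨ y + m = x ∨ x + 2 * m = y ∨ y + 2 * m = x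

variable {m N : ℕ}

local notation "T" => toeplitzGraph N {1, m, 2 * m}

lemma adj_iff_isStep {a b : Fin N} : (T).Adj a b ↔ (a : ℕ) ≠ b ∧ IsStep m a b := by
  change (a ≠ b ∧ Nat.dist a b ∈ ({1, m, 2 * m} : Set ℕ)) ↔ _
  simp only [Set.mem_insert_iff, Set.mem_singleton_iff, Nat.dist, Ne, Fin.ext_iff]
  omega

lemma dist_eq_zero_of_eq {a b : Fin N} (h : (a : ℕ) = b) : (T).dist a b = 0 := by
  rw [Fin.ext h, SimpleGraph.dist_self]

lemma dist_eq_one {a b : Fin N} (h : (a : ℕ) ≠ b ∧ IsStep m a b) : (T).dist a b = 1 :=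
  SimpleGraph.dist_eq_one_iff_adj.2 (adj_iff_isStep.2 h)

lemma dist_ne_one {a b : Fin N} (h : ¬ IsStep m a b) : (T).dist a b ≠ 1 :=
  fun h' => h (adj_iff_isStep.1 (SimpleGraph.dist_eq_one_iff_adj.1 h')).2

lemma dist_eq_two {a b : Fin N} (z : ℕ)
    (h : z < N ∧ (a : ℕ) ≠ b ∧ ¬ IsStep m a b ∧ (a : ℕ) ≠ z ∧ IsStep m a z ∧ z ≠ b ∧ IsStep m z b) :
    (T).dist a b = 2 := by
  obtain ⟨hz, hab, hab', haz, haz', hzb, hzb'⟩ := h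
  refine SimpleGraph.dist_eq_two_iff.2 ⟨Fin.ne_of_val_ne hab, fun h => hab' (adj_iff_isStep.1 h).2,
    ⟨⟨z, hz⟩, (SimpleGraph.mem_commonNeighbors _).2 ⟨?_, ?_⟩⟩⟩
  · exact adj_iff_isStep.2 ⟨haz, haz'⟩
  · exact adj_iff_isStep.2 (show (b : ℕ) ≠ z ∧ IsStep m b z by omega)

lemma dist_ne_two {a b : Fin N} (h : ∀ y, ¬ (IsStep m a y ∧ IsStep m y b)) : (T).dist a b ≠ 2 := by
  intro h2
  obtain ⟨-, -, z, hz⟩ := SimpleGraph.dist_eq_two_iff.1 h2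
  rw [SimpleGraph.mem_commonNeighbors, adj_iff_isStep, adj_iff_isStep] at hz
  exact h z ⟨hz.1.2, by omega⟩

section Certificates

variable {w u v : Fin N}

lemma dist_ne_dist_of_eq (h : (w : ℕ) = u ∧ (u : ℕ) ≠ v ∧ IsStep m u v) :
    (T).dist w u ≠ (T).dist w v := by
  rw [dist_eq_zero_of_eq h.1, dist_eq_one (by omega)]
  exact zero_ne_one

lemma dist_ne_dist_of_step (h : (w : ℕ) ≠ u ∧ IsStep m w u ∧ ¬ IsStep m w v) :
    (T).dist w u ≠ (T).dist w v :=
  ne_of_eq_of_ne (dist_eq_one ⟨h.1, h.2.1⟩) (dist_ne_one h.2.2).symm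

lemma dist_ne_dist_of_twoStep (z : ℕ)
    (h : z < N ∧ (w : ℕ) ≠ u ∧ ¬ IsStep m w u ∧ (w : ℕ) ≠ z ∧ IsStep m w z ∧ z ≠ u ∧ IsStep m z u)
    (h' : ∀ y, ¬ (IsStep m w y ∧ IsStep m y v)) : (T).dist w u ≠ (T).dist w v :=
  ne_of_eq_of_ne (dist_eq_two z h) (dist_ne_two h').symm

end Certificates

lemma eight_le_card_localResolvingNbhd_of_add_one (hm : 4 ≤ m) (hN : N = 4 * m) {u v : Fin N}
    (huv : (u : ℕ) + 1 = v) : 8 ≤ #(localResolvingNbhd (T) u v) := by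
  have := v.isLt
  rcases lt_or_ge (u : ℕ) (2 * m) with hu | hu
  · refine length_le_card_filter [u, u + 1, u + 2, u + m, u + m + 1, u + m + 2, u + 2 * m - 1,
      u + 2 * m] (by simp; omega) (by simp; omega) ?_
    simp only [List.mem_cons, List.not_mem_nil, or_false]
    rintro w (h | h | h | h | h | h | h | h)
    · exact dist_ne_dist_of_eq (by omega)
    · exact (dist_ne_dist_of_eq (by omega)).symm
    · exact (dist_ne_dist_of_step (by omega)).symm
    · exact dist_ne_dist_of_step (by omega)
    · exact (dist_ne_dist_of_step (by omega)).symm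
    · exact (dist_ne_dist_of_twoStep (u + m + 1) (by omega) fun y => by omega).symm
    · exact dist_ne_dist_of_twoStep (u + 2 * m) (by omega) fun y => by omega
    · exact dist_ne_dist_of_step (by omega)
  · refine length_le_card_filter [u + 1 - 2 * m, u + 2 - 2 * m, u - m - 1, u - m, u + 1 - m,
      u - 1, u, u + 1] (by simp; omega) (by simp; omega) ?_
    simp only [List.mem_cons, List.not_mem_nil, or_false]
    rintro w (h | h | h | h | h | h | h | h)
    · exact (dist_ne_dist_of_step (by omega)).symm
    · exact (dist_ne_dist_of_twoStep (u + 1 - 2 * m) (by omega) fun y => by omega).symm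
    · exact dist_ne_dist_of_twoStep (u - 1) (by omega) fun y => by omega
    · exact dist_ne_dist_of_step (by omega)
    · exact (dist_ne_dist_of_step (by omega)).symm
    · exact dist_ne_dist_of_step (by omega)
    · exact dist_ne_dist_of_eq (by omega)
    · exact (dist_ne_dist_of_eq (by omega)).symm

lemma eight_le_card_localResolvingNbhd_of_add (hm : 4 ≤ m) (hN : N = 4 * m) {u v : Fin N}
    (huv : (u : ℕ) + m = v) : 8 ≤ #(localResolvingNbhd (T) u v) := by
  have := v.isLt
  rcases lt_or_ge (u : ℕ) m with hu | hu
  · refine length_le_card_filter [u, u + 1, u + m - 1, u + m, u + m + 1, u + m + 2, u + 3 * m - 1,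
      u + 3 * m] (by simp; omega) (by simp; omega) ?_
    simp only [List.mem_cons, List.not_mem_nil, or_false]
    rintro w (h | h | h | h | h | h | h | h)
    · exact dist_ne_dist_of_eq (by omega)
    · exact dist_ne_dist_of_step (by omega)
    · exact (dist_ne_dist_of_step (by omega)).symm
    · exact (dist_ne_dist_of_eq (by omega)).symm
    · exact (dist_ne_dist_of_step (by omega)).symm
    · exact (dist_ne_dist_of_twoStep (u + m + 1) (by omega) fun y => by omega).symm
    · exact (dist_ne_dist_of_twoStep (u + 3 * m) (by omega) fun y => by omega).symm
    · exact (dist_ne_dist_of_step (by omega)).symm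
  rcases lt_or_ge (u : ℕ) (2 * m) with hu' | hu'
  · refine length_le_card_filter [u - 2, u - 1, u, u + 1, u + m - 1, u + m, u + m + 1, u + m + 2]
      (by simp; omega) (by simp; omega) ?_
    simp only [List.mem_cons, List.not_mem_nil, or_false]
    rintro w (h | h | h | h | h | h | h | h)
    · exact dist_ne_dist_of_twoStep (u - 1) (by omega) fun y => by omega
    · exact dist_ne_dist_of_step (by omega)
    · exact dist_ne_dist_of_eq (by omega)
    · exact dist_ne_dist_of_step (by omega)
    · exact (dist_ne_dist_of_step (by omega)).symm
    · exact (dist_ne_dist_of_eq (by omega)).symm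
    · exact (dist_ne_dist_of_step (by omega)).symm
    · exact (dist_ne_dist_of_twoStep (u + m + 1) (by omega) fun y => by omega).symm
  · refine length_le_card_filter [u - 2 * m, u - 2 * m + 1, u - 2, u - 1, u, u + 1, u + m - 1,
      u + m] (by simp; omega) (by simp; omega) ?_
    simp only [List.mem_cons, List.not_mem_nil, or_false]
    rintro w (h | h | h | h | h | h | h | h)
    · exact dist_ne_dist_of_step (by omega)
    · exact dist_ne_dist_of_twoStep (u - 2 * m) (by omega) fun y => by omega
    · exact dist_ne_dist_of_twoStep (u - 1) (by omega) fun y => by omega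
    · exact dist_ne_dist_of_step (by omega)
    · exact dist_ne_dist_of_eq (by omega)
    · exact dist_ne_dist_of_step (by omega)
    · exact (dist_ne_dist_of_step (by omega)).symm
    · exact (dist_ne_dist_of_eq (by omega)).symm

lemma eight_le_card_localResolvingNbhd_of_add_two_mul (hm : 4 ≤ m) (hN : N = 4 * m)
    {u v : Fin N} (huv : (u : ℕ) + 2 * m = v) : 8 ≤ #(localResolvingNbhd (T) u v) := by
  have := v.isLt
  rcases lt_or_ge (u : ℕ) m with hu | hu
  · refine length_le_card_filter [u, u + 1, u + 2, u + 2 * m - 2, u + 2 * m - 1, u + 2 * m,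
      u + 2 * m + 1, u + 3 * m] (by simp; omega) (by simp; omega) ?_
    simp only [List.mem_cons, List.not_mem_nil, or_false]
    rintro w (h | h | h | h | h | h | h | h)
    · exact dist_ne_dist_of_eq (by omega)
    · exact dist_ne_dist_of_step (by omega)
    · exact dist_ne_dist_of_twoStep (u + 1) (by omega) fun y => by omega
    · exact (dist_ne_dist_of_twoStep (u + 2 * m - 1) (by omega) fun y => by omega).symm
    · exact (dist_ne_dist_of_step (by omega)).symm
    · exact (dist_ne_dist_of_eq (by omega)).symm
    · exact (dist_ne_dist_of_step (by omega)).symm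
    · exact (dist_ne_dist_of_step (by omega)).symm
  · refine length_le_card_filter [u - m, u - 1, u, u + 1, u + 2, u + 2 * m - 2, u + 2 * m - 1,
      u + 2 * m] (by simp; omega) (by simp; omega) ?_
    simp only [List.mem_cons, List.not_mem_nil, or_false]
    rintro w (h | h | h | h | h | h | h | h)
    · exact dist_ne_dist_of_step (by omega)
    · exact dist_ne_dist_of_step (by omega)
    · exact dist_ne_dist_of_eq (by omega)
    · exact dist_ne_dist_of_step (by omega)
    · exact dist_ne_dist_of_twoStep (u + 1) (by omega) fun y => by omega
    · exact (dist_ne_dist_of_twoStep (u + 2 * m - 1) (by omega) fun y => by omega).symm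
    · exact (dist_ne_dist_of_step (by omega)).symm
    · exact (dist_ne_dist_of_eq (by omega)).symm

lemma eight_le_card_localResolvingNbhd (hm : 4 ≤ m) (hN : N = 4 * m) {u v : Fin N}
    (huv : (T).Adj u v) : 8 ≤ #(localResolvingNbhd (T) u v) := by
  wlog hlt : (u : ℕ) < v generalizing u v
  · rw [localResolvingNbhd_comm]
    exact this huv.symm (by have := (adj_iff_isStep.1 huv).1; omega)
  obtain ⟨-, h | h | h | h | h | h⟩ := adj_iff_isStep.1 huv
  · exact eight_le_card_localResolvingNbhd_of_add_one hm hN h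
  · omega
  · exact eight_le_card_localResolvingNbhd_of_add hm hN h
  · omega
  · exact eight_le_card_localResolvingNbhd_of_add_two_mul hm hN h
  · omega

lemma ldimf_le_div_eight (hm : 4 ≤ m) (hN : N = 4 * m) : ldimf (T) ≤ N / 8 := by
  simpa using ldimf_le_card_div (by norm_num) fun u v => eight_le_card_localResolvingNbhd hm hN

def swapParity (hN : 2 ∣ N) : Equiv.Perm (Fin N) :=
  Function.Involutive.toPerm
    (fun x => ⟨if (x : ℕ) % 2 = 0 then x + 1 else x - 1, by split_ifs <;> omega⟩)
    fun x => by ext; dsimp only; split_ifs <;> omega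

lemma val_swapParity (hN : 2 ∣ N) (x : Fin N) :
    (swapParity hN x : ℕ) = if (x : ℕ) % 2 = 0 then (x : ℕ) + 1 else (x : ℕ) - 1 := rfl

lemma swapParity_ne_self (hN : 2 ∣ N) (x : Fin N) : swapParity hN x ≠ x := by
  intro h
  have h' := congrArg Fin.val h
  rw [val_swapParity] at h'
  split_ifs at h' <;> omega

lemma exists_adj_dist_eq_dist (hm : 3 ≤ m) (hN : N = 4 * m) {a b : Fin N}
    (ha : (a : ℕ) % 2 = 0) (hb : (b : ℕ) = a + 1) :
    ∃ u v, (T).Adj u v ∧ (T).dist a u = (T).dist a v ∧ (T).dist b u = (T).dist b v := by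
  have := b.isLt
  rcases lt_or_ge (a : ℕ) (2 * m) with h | h
  · obtain ⟨u, hu⟩ : ∃ u : Fin N, (u : ℕ) = a + m := ⟨⟨a + m, by omega⟩, rfl⟩
    obtain ⟨v, hv⟩ : ∃ v : Fin N, (v : ℕ) = a + 2 * m := ⟨⟨a + 2 * m, by omega⟩, rfl⟩
    refine ⟨u, v, adj_iff_isStep.2 (by omega), ?_, ?_⟩
    · rw [dist_eq_one (by omega), dist_eq_one (by omega)]
    · rw [dist_eq_two (a + m + 1) (by omega), dist_eq_two (a + 2 * m + 1) (by omega)]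
  · obtain ⟨u, hu⟩ : ∃ u : Fin N, (u : ℕ) = a - 2 * m := ⟨⟨a - 2 * m, by omega⟩, rfl⟩
    obtain ⟨v, hv⟩ : ∃ v : Fin N, (v : ℕ) = a - m := ⟨⟨a - m, by omega⟩, rfl⟩
    refine ⟨u, v, adj_iff_isStep.2 (by omega), ?_, ?_⟩
    · rw [dist_eq_one (by omega), dist_eq_one (by omega)]
    · rw [dist_eq_two (a + 1 - 2 * m) (by omega), dist_eq_two (a + 1 - m) (by omega)]

lemma div_le_ldimf (hm : 3 ≤ m) (hN : N = 4 * m) : (N : ℝ) / (N - 2) ≤ ldimf (T) := by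
  have h2 : 2 ∣ N := ⟨2 * m, by omega⟩
  have hσ := val_swapParity h2
  refine (card_div_le_ldimf_of_perm (by simp; omega) (swapParity h2) (swapParity_ne_self h2)
    fun w => ?_).trans_eq' (by simp)
  by_cases hw : (w : ℕ) % 2 = 0
  · exact exists_adj_dist_eq_dist hm hN hw (by rw [hσ, if_pos hw])
  · obtain ⟨u, v, huv, h₁, h₂⟩ := exists_adj_dist_eq_dist (a := swapParity h2 w) (b := w) hm hN
      (by rw [hσ, if_neg hw]; omega) (by rw [hσ, if_neg hw]; omega)
    exact ⟨u, v, huv, h₂, h₁⟩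

end toeplitzGraph

/-- For every integer `k ≥ 4`,
`2^k/(2^k-2) ≤ ldimf(T_{2^k}⟨{1, 2^(k-2), 2^(k-1)}⟩) ≤ 2^k/8 = 2^(k-3)`. -/
theorem ldimf_toeplitz_pow_two (k : ℕ) (hk : 4 ≤ k) :
    (2 : ℝ) ^ k / ((2 : ℝ) ^ k - 2)
        ≤ ldimf (toeplitzGraph (2 ^ k) {1, 2 ^ (k - 2), 2 ^ (k - 1)}) ∧
      ldimf (toeplitzGraph (2 ^ k) {1, 2 ^ (k - 2), 2 ^ (k - 1)}) ≤ (2 : ℝ) ^ k / 8 ∧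
      (2 : ℝ) ^ k / 8 = (2 : ℝ) ^ (k - 3) := by
  have hm : 2 ^ 2 ≤ 2 ^ (k - 2) := Nat.pow_le_pow_right two_pos (by omega)
  have hN : 2 ^ k = 4 * 2 ^ (k - 2) := by rw [← pow_sub_mul_pow 2 (by omega : 2 ≤ k)]; ring
  have hS : 2 ^ (k - 1) = 2 * 2 ^ (k - 2) := by
    rw [← pow_sub_mul_pow 2 (by omega : k - 2 ≤ k - 1), show k - 1 - (k - 2) = 1 by omega]; ring
  have hcast : ((2 ^ k : ℕ) : ℝ) = 2 ^ k := by norm_num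
  rw [hS, ← hcast]
  refine ⟨toeplitzGraph.div_le_ldimf (by omega) hN, toeplitzGraph.ldimf_le_div_eight hm hN, ?_⟩
  rw [hcast, ← pow_sub_mul_pow (2 : ℝ) (by omega : 3 ≤ k)]
  ring
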